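/- arXiv:2311.16049 — 2 statements merged into one kernel-verified Lean document; each statement's English description precedes it below -/
import Mathlib

section
/- For any steady state, the constant β* satisfies the scalar fixed-point equation β* = β*·(μN0/(p+β*+μ))·(1 + p(1−ε)/(ζε+β*(1−ε)+μ))·(R_A + R_I). -/
open MeasureTheory Filter

noncomputable section

/-- Survival kernel of the exposed class: `π_E(θ) = exp(−∫₀^θ (k(τ)+μ) dτ)`. -/
def piE (μ : ℝ) (k : ℝ → ℝ) (θ : ℝ) : ℝ :=
  Real.exp (-(∫ τ in (0:ℝ)..θ, (k τ + μ)))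

/-- Survival kernel of the asymptomatic class:
`π_A(θ) = exp(−∫₀^θ (γ_A ξ + χ(1−ξ) + μ) dτ)`. -/
def piA (μ : ℝ) (γA ξ χ : ℝ → ℝ) (θ : ℝ) : ℝ :=
  Real.exp (-(∫ τ in (0:ℝ)..θ, (γA τ * ξ τ + χ τ * (1 - ξ τ) + μ)))

/-- Survival kernel of the symptomatic class: `π_I(θ) = exp(−∫₀^θ (γ_I(τ)+μ) dτ)`. -/
def piI (μ : ℝ) (γI : ℝ → ℝ) (θ : ℝ) : ℝ :=
  Real.exp (-(∫ τ in (0:ℝ)..θ, (γI τ + μ)))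

/-- An essentially bounded measurable nonnegative coefficient on `ℝ≥0`
(element of `L∞(ℝ≥0; ℝ≥0)`). -/
def CoeffBM (f : ℝ → ℝ) : Prop :=
  Measurable f ∧ (∃ C : ℝ, ∀ θ, 0 ≤ θ → f θ ≤ C) ∧ (∀ θ, 0 ≤ θ → 0 ≤ f θ)

/-- A measurable coefficient with values in `[0,1]` on `ℝ≥0`
(element of `L∞(ℝ≥0; [0,1])`). -/
def FracBM (f : ℝ → ℝ) : Prop :=
  Measurable f ∧ ∀ θ, 0 ≤ θ → f θ ∈ Set.Icc (0:ℝ) 1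

/-- A bounded continuous nonnegative coefficient on `ℝ≥0`. -/
def CoeffBC (f : ℝ → ℝ) : Prop :=
  Continuous f ∧ (∃ C : ℝ, ∀ θ, 0 ≤ θ → f θ ≤ C) ∧ (∀ θ, 0 ≤ θ → 0 ≤ f θ)

/-- A continuous coefficient with values in `[0,1]` on `ℝ≥0`. -/
def FracBC (f : ℝ → ℝ) : Prop :=
  Continuous f ∧ ∀ θ, 0 ≤ θ → f θ ∈ Set.Icc (0:ℝ) 1

/-- Variation-of-constants expression `S[b]` for the susceptible compartment. -/
def Ssol (μ N0 p S0 : ℝ) (b : ℝ → ℝ) (t : ℝ) : ℝ :=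
  S0 * Real.exp (-(∫ s in (0:ℝ)..t, (p + b s + μ))) +
    μ * N0 * ∫ s in (0:ℝ)..t, Real.exp (-(∫ τ in s..t, (p + b τ + μ)))

/-- Variation-of-constants expression `V[b]` for the vaccinated compartment. -/
def Vsol (μ N0 p ζ ε S0 V0 : ℝ) (b : ℝ → ℝ) (t : ℝ) : ℝ :=
  V0 * Real.exp (-(∫ s in (0:ℝ)..t, (ζ * ε + b s * (1 - ε) + μ))) +
    p * ∫ s in (0:ℝ)..t, Ssol μ N0 p S0 b s *
      Real.exp (-(∫ τ in s..t, (ζ * ε + b τ * (1 - ε) + μ)))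

/-- The boundary value `ε̃(t) = β(t)·(S(t) + (1−ε)V(t))`. -/
def epsTilde (μ N0 p ζ ε S0 V0 : ℝ) (β : ℝ → ℝ) (t : ℝ) : ℝ :=
  β t * (Ssol μ N0 p S0 β t + (1 - ε) * Vsol μ N0 p ζ ε S0 V0 β t)

/-- Age density along characteristics: initial datum `f0` transported below the
diagonal, boundary datum `bdry` transported above the diagonal, with survival
kernel `π`. -/
def dens (π f0 bdry : ℝ → ℝ) (t θ : ℝ) : ℝ :=
  if t < θ then f0 (θ - t) * π θ / π (θ - t) else bdry (t - θ) * π θ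

/-- The Volterra integral system for the triple `(β, α, ι)` of boundary values. -/
def VolterraSystem (μ N0 p ζ ε S0 V0 : ℝ)
    (βA βI k χ γA γI q ξ e0 a0 i0 β α ι : ℝ → ℝ) : Prop :=
  ContinuousOn β (Set.Ici 0) ∧ ContinuousOn α (Set.Ici 0) ∧ ContinuousOn ι (Set.Ici 0) ∧
    ∀ t, 0 ≤ t →
      β t = (∫ s in (0:ℝ)..t,
          (βA (t - s) * α s * piA μ γA ξ χ (t - s) +
            βI (t - s) * ι s * piI μ γI (t - s))) +
        (∫ s in Set.Ioi (0:ℝ),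
          (βA (t + s) * a0 s * piA μ γA ξ χ (t + s) / piA μ γA ξ χ s +
            βI (t + s) * i0 s * piI μ γI (t + s) / piI μ γI s)) ∧
      α t = (∫ s in (0:ℝ)..t,
          k (t - s) * q (t - s) * β s *
            (Ssol μ N0 p S0 β s + (1 - ε) * Vsol μ N0 p ζ ε S0 V0 β s) * piE μ k (t - s)) +
        (∫ s in Set.Ioi (0:ℝ),
          k (t + s) * q (t + s) * e0 s * piE μ k (t + s) / piE μ k s) ∧
      ι t = (∫ s in (0:ℝ)..t,
          (k (t - s) * (1 - q (t - s)) * β s *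
              (Ssol μ N0 p S0 β s + (1 - ε) * Vsol μ N0 p ζ ε S0 V0 β s) * piE μ k (t - s) +
            χ (t - s) * (1 - ξ (t - s)) * α s * piA μ γA ξ χ (t - s))) +
        (∫ s in Set.Ioi (0:ℝ),
          (k (t + s) * (1 - q (t + s)) * e0 s * piE μ k (t + s) / piE μ k s +
            χ (t + s) * (1 - ξ (t + s)) * a0 s * piA μ γA ξ χ (t + s) / piA μ γA ξ χ s))

/-- `R_A = (∫₀^∞ k q π_E)·(∫₀^∞ β_A π_A)`. -/
def RAdef (μ : ℝ) (βA k q γA ξ χ : ℝ → ℝ) : ℝ :=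
  (∫ s in Set.Ioi (0:ℝ), k s * q s * piE μ k s) *
    (∫ s in Set.Ioi (0:ℝ), βA s * piA μ γA ξ χ s)

/-- `R_I = (∫₀^∞ k(1−q)π_E + (∫₀^∞ k q π_E)·(∫₀^∞ χ(1−ξ)π_A))·(∫₀^∞ β_I π_I)`. -/
def RIdef (μ : ℝ) (βI k q χ ξ γA γI : ℝ → ℝ) : ℝ :=
  ((∫ s in Set.Ioi (0:ℝ), k s * (1 - q s) * piE μ k s) +
      (∫ s in Set.Ioi (0:ℝ), k s * q s * piE μ k s) *
        (∫ s in Set.Ioi (0:ℝ), χ s * (1 - ξ s) * piA μ γA ξ χ s)) *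
    (∫ s in Set.Ioi (0:ℝ), βI s * piI μ γI s)

/-- The basic reproduction number `R₀`. -/
def R0def (μ N0 p ζ ε : ℝ) (βA βI k χ γA γI q ξ : ℝ → ℝ) : ℝ :=
  (μ * N0 / (p + μ)) * (1 + p * (1 - ε) / (ζ * ε + μ)) *
    (RAdef μ βA k q γA ξ χ + RIdef μ βI k q χ ξ γA γI)

/-- A steady state of the age-structured SVEAIR problem. -/
def SteadyState (μ N0 p ζ ε : ℝ) (βA βI k χ γA γI q ξ : ℝ → ℝ)
    (Sst Vst βst εst αst ιst : ℝ) (est ast ist : ℝ → ℝ) : Prop :=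
  0 ≤ Sst ∧ 0 ≤ Vst ∧ 0 ≤ βst ∧ 0 ≤ εst ∧ 0 ≤ αst ∧ 0 ≤ ιst ∧
    (∀ θ, 0 ≤ θ → 0 ≤ est θ) ∧ (∀ θ, 0 ≤ θ → 0 ≤ ast θ) ∧ (∀ θ, 0 ≤ θ → 0 ≤ ist θ) ∧
    Sst = μ * N0 / (p + βst + μ) ∧
    Vst = p * Sst / (ζ * ε + βst * (1 - ε) + μ) ∧
    (∀ θ, 0 ≤ θ → est θ = εst * piE μ k θ) ∧
    (∀ θ, 0 ≤ θ → ast θ = αst * piA μ γA ξ χ θ) ∧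
    (∀ θ, 0 ≤ θ → ist θ = ιst * piI μ γI θ) ∧
    εst = βst * (Sst + (1 - ε) * Vst) ∧
    αst = (∫ θ in Set.Ioi (0:ℝ), k θ * q θ * est θ) ∧
    ιst = (∫ θ in Set.Ioi (0:ℝ), (k θ * (1 - q θ) * est θ + χ θ * (1 - ξ θ) * ast θ)) ∧
    βst = (∫ θ in Set.Ioi (0:ℝ), (βA θ * ast θ + βI θ * ist θ))

/-- The scalar function `g` whose fixed points characterize steady states. -/
def gfun (μ N0 p ζ ε RA RI β : ℝ) : ℝ :=
  (μ * N0 / (p + β + μ)) * (1 + p * (1 - ε) / (ζ * ε + β * (1 - ε) + μ)) * (RA + RI)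

/-- The Lyapunov weight `f_I`. -/
def fIfun (μ M : ℝ) (βI γI : ℝ → ℝ) (θ : ℝ) : ℝ :=
  M * ∫ s in Set.Ioi θ, βI s * Real.exp (-(∫ τ in θ..s, (γI τ + μ)))

/-- The Lyapunov weight `f_A`. -/
def fAfun (μ M : ℝ) (βA βI γA γI ξ χ : ℝ → ℝ) (θ : ℝ) : ℝ :=
  M * (∫ s in Set.Ioi θ,
      βA s * Real.exp (-(∫ τ in θ..s, (γA τ * ξ τ + χ τ * (1 - ξ τ) + μ)))) +
    fIfun μ M βI γI 0 * ∫ s in Set.Ioi θ,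
      χ s * (1 - ξ s) * Real.exp (-(∫ τ in θ..s, (γA τ * ξ τ + χ τ * (1 - ξ τ) + μ)))

/-- The Lyapunov weight `f_E`. -/
def fEfun (μ M : ℝ) (βA βI k q γA γI ξ χ : ℝ → ℝ) (θ : ℝ) : ℝ :=
  fAfun μ M βA βI γA γI ξ χ 0 *
      (∫ s in Set.Ioi θ, k s * q s * Real.exp (-(∫ τ in θ..s, (k τ + μ)))) +
    fIfun μ M βI γI 0 *
      ∫ s in Set.Ioi θ, k s * (1 - q s) * Real.exp (-(∫ τ in θ..s, (k τ + μ)))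

/-! At a steady state each age profile is its boundary value times a survival kernel, so the
three boundary conditions become linear relations
`α* = ε* ∫ k q π_E`, `ι* = ε* ∫ k (1-q) π_E + α* ∫ χ (1-ξ) π_A`, `β* = α* ∫ β_A π_A + ι* ∫ β_I π_I`,
and substituting `ε* = β* (S* + (1-ε) V*)` gives the fixed-point equation. Since `μ > 0`, every
survival kernel is dominated by `exp (-μ θ)`; this makes the integrals against bounded weights
finite, which is what allows the integrals of sums to be split. -/

open Set

lemma FracBM.one_sub {q : ℝ → ℝ} (hq : FracBM q) : FracBM (fun x => 1 - q x) :=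
  ⟨measurable_const.sub hq.1, fun θ hθ => by
    obtain ⟨h0, h1⟩ := hq.2 θ hθ
    constructor <;> linarith⟩

namespace CoeffBM

variable {f g : ℝ → ℝ}

lemma add (hf : CoeffBM f) (hg : CoeffBM g) : CoeffBM (fun x => f x + g x) := by
  obtain ⟨hfm, ⟨Cf, hfC⟩, hf0⟩ := hf
  obtain ⟨hgm, ⟨Cg, hgC⟩, hg0⟩ := hg
  exact ⟨hfm.add hgm, ⟨Cf + Cg, fun θ hθ => add_le_add (hfC θ hθ) (hgC θ hθ)⟩,
    fun θ hθ => add_nonneg (hf0 θ hθ) (hg0 θ hθ)⟩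

lemma mul_frac (hf : CoeffBM f) (hg : FracBM g) : CoeffBM (fun x => f x * g x) := by
  obtain ⟨hfm, ⟨C, hfC⟩, hf0⟩ := hf
  refine ⟨hfm.mul hg.1, ⟨C, fun θ hθ => ?_⟩, fun θ hθ => mul_nonneg (hf0 θ hθ) (hg.2 θ hθ).1⟩
  calc f θ * g θ ≤ f θ * 1 := mul_le_mul_of_nonneg_left (hg.2 θ hθ).2 (hf0 θ hθ)
    _ ≤ C := by simpa using hfC θ hθ

lemma integrableOn_Icc (hf : CoeffBM f) (b : ℝ) : IntegrableOn f (Icc 0 b) := by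
  obtain ⟨hfm, ⟨C, hfC⟩, hf0⟩ := hf
  refine Measure.integrableOn_of_bounded (M := C) measure_Icc_lt_top.ne
    hfm.aestronglyMeasurable ?_
  filter_upwards [ae_restrict_mem measurableSet_Icc] with θ hθ
  rw [Real.norm_of_nonneg (hf0 θ hθ.1)]
  exact hfC θ hθ.1

end CoeffBM

lemma continuousOn_Ici_primitive {f : ℝ → ℝ} (hf : ∀ b, IntegrableOn f (Icc 0 b)) :
    ContinuousOn (fun θ => ∫ τ in (0:ℝ)..θ, f τ) (Ici 0) := by
  intro x (hx : 0 ≤ x)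
  have hI : uIcc 0 (x + 1) = Icc 0 (x + 1) := uIcc_of_le (by linarith)
  have hcont := intervalIntegral.continuousOn_primitive_interval (hI ▸ hf (x + 1))
  refine (hcont x (hI ▸ ⟨hx, by linarith⟩)).mono_of_mem_nhdsWithin ?_
  rw [hI, ← Ici_inter_Iic]
  exact inter_mem_nhdsWithin _ (Iic_mem_nhds (by linarith))

namespace CoeffBM

variable {f w : ℝ → ℝ} {μ : ℝ}

lemma continuousOn_exp_neg_integral (hf : CoeffBM f) :
    ContinuousOn (fun θ => Real.exp (-(∫ τ in (0:ℝ)..θ, (f τ + μ)))) (Ici 0) :=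
  Real.continuous_exp.comp_continuousOn
    (continuousOn_Ici_primitive fun b =>
      (hf.integrableOn_Icc b).add (integrableOn_const measure_Icc_lt_top.ne)).neg

lemma exp_neg_integral_le (hf : CoeffBM f) {θ : ℝ} (hθ : 0 ≤ θ) :
    Real.exp (-(∫ τ in (0:ℝ)..θ, (f τ + μ))) ≤ Real.exp (-(μ * θ)) := by
  have hint : IntervalIntegrable (fun τ => f τ + μ) volume 0 θ :=
    (intervalIntegrable_iff_integrableOn_Icc_of_le hθ).2
      ((hf.integrableOn_Icc θ).add (integrableOn_const measure_Icc_lt_top.ne))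
  have hmono := intervalIntegral.integral_mono_on hθ intervalIntegrable_const hint
    fun τ hτ => le_add_of_nonneg_left (hf.2.2 τ hτ.1)
  rw [Real.exp_le_exp, neg_le_neg_iff]
  simpa [mul_comm] using hmono

lemma integrableOn_mul_exp_neg_integral (hw : CoeffBM w) (hf : CoeffBM f) (hμ : 0 < μ) :
    IntegrableOn (fun θ => w θ * Real.exp (-(∫ τ in (0:ℝ)..θ, (f τ + μ)))) (Ioi 0) := by
  obtain ⟨hwm, ⟨C, hwC⟩, hw0⟩ := hw
  have hmeas : AEStronglyMeasurable
      (fun θ => w θ * Real.exp (-(∫ τ in (0:ℝ)..θ, (f τ + μ)))) (volume.restrict (Ioi 0)) :=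
    hwm.aestronglyMeasurable.restrict.mul
      ((hf.continuousOn_exp_neg_integral.mono Ioi_subset_Ici_self).aestronglyMeasurable
        measurableSet_Ioi)
  refine Integrable.mono' ((exp_neg_integrableOn_Ioi 0 hμ).const_mul C) hmeas ?_
  filter_upwards [ae_restrict_mem measurableSet_Ioi] with θ hθ
  have hθ0 : (0:ℝ) ≤ θ := le_of_lt hθ
  rw [Real.norm_of_nonneg (mul_nonneg (hw0 θ hθ0) (Real.exp_pos _).le), neg_mul]
  exact mul_le_mul (hwC θ hθ0) (hf.exp_neg_integral_le hθ0) (Real.exp_pos _).le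
    ((hw0 θ hθ0).trans (hwC θ hθ0))

end CoeffBM

section Profiles

variable {s : Set ℝ} {w w₁ w₂ π π₁ π₂ e e₁ e₂ : ℝ → ℝ} {c c₁ c₂ : ℝ}

lemma setIntegral_mul_eq_const_mul (hs : MeasurableSet s) (he : ∀ θ ∈ s, e θ = c * π θ) :
    ∫ θ in s, w θ * e θ = c * ∫ θ in s, w θ * π θ := by
  rw [← integral_const_mul]
  exact setIntegral_congr_fun hs fun θ hθ => by rw [he θ hθ]; ring

lemma setIntegral_add_mul_eq_const_mul (hs : MeasurableSet s)
    (h₁ : IntegrableOn (fun θ => w₁ θ * π₁ θ) s) (h₂ : IntegrableOn (fun θ => w₂ θ * π₂ θ) s)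
    (he₁ : ∀ θ ∈ s, e₁ θ = c₁ * π₁ θ) (he₂ : ∀ θ ∈ s, e₂ θ = c₂ * π₂ θ) :
    ∫ θ in s, (w₁ θ * e₁ θ + w₂ θ * e₂ θ) =
      c₁ * (∫ θ in s, w₁ θ * π₁ θ) + c₂ * ∫ θ in s, w₂ θ * π₂ θ := by
  rw [← integral_const_mul, ← integral_const_mul,
    ← integral_add (h₁.const_mul c₁) (h₂.const_mul c₂)]
  exact setIntegral_congr_fun hs fun θ hθ => by rw [he₁ θ hθ, he₂ θ hθ]; ring

end Profiles

theorem steady_state_fixed_point_equation_general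
    (μ N0 p ζ ε : ℝ) (βA βI k χ γA γI q ξ : ℝ → ℝ)
    (hμ : 0 < μ)
    (hβA : CoeffBM βA) (hβI : CoeffBM βI) (hk : CoeffBM k) (hχ : CoeffBM χ)
    (hγA : CoeffBM γA) (hγI : CoeffBM γI) (hq : FracBM q) (hξ : FracBM ξ)
    (Sst Vst βst εst αst ιst : ℝ) (est ast ist : ℝ → ℝ)
    (hss : SteadyState μ N0 p ζ ε βA βI k χ γA γI q ξ Sst Vst βst εst αst ιst est ast ist) :
    βst = βst * ((μ * N0 / (p + βst + μ)) *
        (1 + p * (1 - ε) / (ζ * ε + βst * (1 - ε) + μ))) *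
      (RAdef μ βA k q γA ξ χ + RIdef μ βI k q χ ξ γA γI) := by
  obtain ⟨-, -, -, -, -, -, -, -, -, hS, hV, hest, hast, hist, hε, hαeq, hιeq, hβeq⟩ := hss
  have hrateA := (hγA.mul_frac hξ).add (hχ.mul_frac hξ.one_sub)
  have hE : ∀ θ ∈ Ioi (0:ℝ), est θ = εst * piE μ k θ := fun θ hθ => hest θ (le_of_lt hθ)
  have hA : ∀ θ ∈ Ioi (0:ℝ), ast θ = αst * piA μ γA ξ χ θ := fun θ hθ => hast θ (le_of_lt hθ)
  have hI : ∀ θ ∈ Ioi (0:ℝ), ist θ = ιst * piI μ γI θ := fun θ hθ => hist θ (le_of_lt hθ)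
  have hα : αst = εst * ∫ s in Ioi (0:ℝ), k s * q s * piE μ k s := by
    rw [hαeq]; exact setIntegral_mul_eq_const_mul measurableSet_Ioi hE
  have hι : ιst = εst * (∫ s in Ioi (0:ℝ), k s * (1 - q s) * piE μ k s) +
      αst * ∫ s in Ioi (0:ℝ), χ s * (1 - ξ s) * piA μ γA ξ χ s := by
    rw [hιeq]
    exact setIntegral_add_mul_eq_const_mul measurableSet_Ioi
      ((hk.mul_frac hq.one_sub).integrableOn_mul_exp_neg_integral hk hμ)
      ((hχ.mul_frac hξ.one_sub).integrableOn_mul_exp_neg_integral hrateA hμ) hE hA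
  have hβ : βst = αst * (∫ s in Ioi (0:ℝ), βA s * piA μ γA ξ χ s) +
      ιst * ∫ s in Ioi (0:ℝ), βI s * piI μ γI s := by
    rw [hβeq]
    exact setIntegral_add_mul_eq_const_mul measurableSet_Ioi
      (hβA.integrableOn_mul_exp_neg_integral hrateA hμ)
      (hβI.integrableOn_mul_exp_neg_integral hγI hμ) hA hI
  rw [RAdef, RIdef]
  conv_lhs => rw [hβ]
  rw [hι, hα, hε, hV, hS]
  ring

/-- For any steady state, the constant `β*` satisfies the
scalar fixed-point equation
`β* = β*·(μN0/(p+β*+μ))·(1 + p(1−ε)/(ζε+β*(1−ε)+μ))·(R_A + R_I)`. -/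
theorem steady_state_fixed_point_equation
    (μ N0 p ζ ε : ℝ) (βA βI k χ γA γI q ξ : ℝ → ℝ)
    (hμ : 0 < μ) (hN0 : 0 ≤ N0) (hp : 0 ≤ p) (hζ : 0 ≤ ζ) (hε : ε ∈ Set.Icc (0:ℝ) 1)
    (hβA : CoeffBM βA) (hβI : CoeffBM βI) (hk : CoeffBM k) (hχ : CoeffBM χ)
    (hγA : CoeffBM γA) (hγI : CoeffBM γI) (hq : FracBM q) (hξ : FracBM ξ)
    (Sst Vst βst εst αst ιst : ℝ) (est ast ist : ℝ → ℝ)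
    (hss : SteadyState μ N0 p ζ ε βA βI k χ γA γI q ξ Sst Vst βst εst αst ιst est ast ist) :
    βst = βst * ((μ * N0 / (p + βst + μ)) *
        (1 + p * (1 - ε) / (ζ * ε + βst * (1 - ε) + μ))) *
      (RAdef μ βA k q γA ξ χ + RIdef μ βI k q χ ξ γA γI) :=
  steady_state_fixed_point_equation_general μ N0 p ζ ε βA βI k χ γA γI q ξ hμ hβA hβI hk hχ hγA hγI
    hq hξ Sst Vst βst εst αst ιst est ast ist hss
end
end

section
/- If R0 > 1, then there exists exactly one real β > 0 with g(β) = 1; equivalently, the polynomial b2·x² + b1·x + b0 has exactly one positive real root. -/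
open MeasureTheory Filter

noncomputable section

/-!
Clearing the two denominators of `g` turns `g(β) = 1`, for `β ≥ 0`, into
`b2 β² + b1 β + b0 = 0`, and `R₀ > 1` says exactly that `b0 < 0`. A quadratic with `b2 ≥ 0` and
`b0 < 0` has at most one positive root: if `x, y > 0` are roots then
`(y - x)(b2 (x + y) + b1) = 0`, and `b2 y + b1 = -b0 / y > 0`. It has one because it is negative
at `0` and tends to `+∞`: either `b2 > 0`, or `b2 = 0` (that is, `ε = 1`) and `b1 = ζ + μ > 0`.
-/

theorem eq_of_pos_roots_quadratic {a b c x y : ℝ} (ha : 0 ≤ a) (hc : c < 0)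
    (hx : 0 < x) (hy : 0 < y)
    (hxroot : a * x ^ 2 + b * x + c = 0) (hyroot : a * y ^ 2 + b * y + c = 0) : x = y := by
  have hfactor : (y - x) * (a * (x + y) + b) = 0 := by linear_combination hyroot - hxroot
  have hslope : 0 < a * (x + y) + b := by
    have : 0 < a * y + b := pos_of_mul_pos_left (by linear_combination hc - hyroot) hy.le
    nlinarith [mul_nonneg ha hx.le]
  linarith [sub_eq_zero.mp ((mul_eq_zero.mp hfactor).resolve_right hslope.ne')]

theorem exists_pos_root_quadratic {a b c : ℝ} (ha : 0 ≤ a) (hc : c < 0) (hab : 0 < a ∨ 0 < b) :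
    ∃ x : ℝ, 0 < x ∧ a * x ^ 2 + b * x + c = 0 := by
  rcases ha.lt_or_eq with ha | rfl
  · have hdisc : 0 ≤ b ^ 2 - 4 * a * c := by nlinarith [sq_nonneg b]
    set s := √(b ^ 2 - 4 * a * c)
    have hs : s ^ 2 = b ^ 2 - 4 * a * c := Real.sq_sqrt hdisc
    have hbs : b < s := by nlinarith [Real.sqrt_nonneg (b ^ 2 - 4 * a * c)]
    refine ⟨(-b + s) / (2 * a), div_pos (by linarith) (by positivity), ?_⟩
    field_simp
    linear_combination hs
  · have hb : 0 < b := hab.resolve_left (lt_irrefl 0)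
    exact ⟨-c / b, div_pos (neg_pos.mpr hc) hb, by field_simp; ring⟩

theorem existsUnique_pos_root_quadratic {a b c : ℝ} (ha : 0 ≤ a) (hc : c < 0)
    (hab : 0 < a ∨ 0 < b) : ∃! x : ℝ, 0 < x ∧ a * x ^ 2 + b * x + c = 0 := by
  obtain ⟨x, hx, hxroot⟩ := exists_pos_root_quadratic ha hc hab
  exact ⟨x, ⟨hx, hxroot⟩, fun y ⟨hy, hyroot⟩ => eq_of_pos_roots_quadratic ha hc hy hx hyroot hxroot⟩

def steadyStateB1 (μ N0 p ζ ε RA RI : ℝ) : ℝ :=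
  (p + μ) * (1 - ε) + ζ * ε + μ - μ * N0 * (1 - ε) * (RA + RI)

def steadyStateB0 (μ N0 p ζ ε RA RI : ℝ) : ℝ :=
  (p + μ) * (ζ * ε + μ) * (1 - (μ * N0 / (p + μ)) * (1 + p * (1 - ε) / (ζ * ε + μ)) * (RA + RI))

section SteadyStateQuadratic

variable {μ N0 p ζ ε RA RI : ℝ}

theorem gfun_mul_denominators {β : ℝ} (h₁ : p + β + μ ≠ 0) (h₂ : ζ * ε + β * (1 - ε) + μ ≠ 0) :
    gfun μ N0 p ζ ε RA RI β * ((p + β + μ) * (ζ * ε + β * (1 - ε) + μ)) =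
      μ * N0 * (ζ * ε + β * (1 - ε) + μ + p * (1 - ε)) * (RA + RI) := by
  rw [gfun, one_add_div h₂]
  field_simp

theorem gfun_eq_one_iff_quadratic (hμ : 0 < μ) (hp : 0 ≤ p) (hζ : 0 ≤ ζ)
    (hε : ε ∈ Set.Icc (0:ℝ) 1) {β : ℝ} (hβ : 0 ≤ β) :
    gfun μ N0 p ζ ε RA RI β = 1 ↔
      (1 - ε) * β ^ 2 + steadyStateB1 μ N0 p ζ ε RA RI * β + steadyStateB0 μ N0 p ζ ε RA RI = 0 := by
  obtain ⟨hε0, hε1⟩ := hε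
  have hpμ : 0 < p + μ := by linarith
  have hζμ : 0 < ζ * ε + μ := by positivity
  have h₁ : 0 < p + β + μ := by linarith
  have h₂ : 0 < ζ * ε + β * (1 - ε) + μ := by nlinarith
  have hquadratic :
      (1 - ε) * β ^ 2 + steadyStateB1 μ N0 p ζ ε RA RI * β + steadyStateB0 μ N0 p ζ ε RA RI =
        (p + β + μ) * (ζ * ε + β * (1 - ε) + μ) -
          μ * N0 * (ζ * ε + β * (1 - ε) + μ + p * (1 - ε)) * (RA + RI) := by
    rw [steadyStateB1, steadyStateB0]
    field_simp
    ring
  rw [hquadratic, sub_eq_zero, ← gfun_mul_denominators h₁.ne' h₂.ne']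
  exact (mul_eq_right₀ (by positivity)).symm.trans eq_comm

theorem steadyStateB0_neg (hμ : 0 < μ) (hp : 0 ≤ p) (hζ : 0 ≤ ζ) (hε : 0 ≤ ε)
    (hR0 : 1 < (μ * N0 / (p + μ)) * (1 + p * (1 - ε) / (ζ * ε + μ)) * (RA + RI)) :
    steadyStateB0 μ N0 p ζ ε RA RI < 0 :=
  mul_neg_of_pos_of_neg (by positivity) (by linarith)

theorem steadyStateB1_pos_of_eq_one (hμ : 0 < μ) (hζ : 0 ≤ ζ) :
    0 < steadyStateB1 μ N0 p ζ 1 RA RI := by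
  rw [steadyStateB1]
  linarith

end SteadyStateQuadratic

theorem unique_positive_root_of_R0_gt_one_general
    (μ N0 p ζ ε RA RI : ℝ)
    (hμ : 0 < μ) (hp : 0 ≤ p) (hζ : 0 ≤ ζ) (hε : ε ∈ Set.Icc (0:ℝ) 1)
    (hR0 : 1 < (μ * N0 / (p + μ)) * (1 + p * (1 - ε) / (ζ * ε + μ)) * (RA + RI)) :
    (∃! β : ℝ, 0 < β ∧ gfun μ N0 p ζ ε RA RI β = 1) ∧
      ∃! x : ℝ, 0 < x ∧
        (1 - ε) * x ^ 2 +
            ((p + μ) * (1 - ε) + ζ * ε + μ - μ * N0 * (1 - ε) * (RA + RI)) * x +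
            (p + μ) * (ζ * ε + μ) *
              (1 - (μ * N0 / (p + μ)) * (1 + p * (1 - ε) / (ζ * ε + μ)) * (RA + RI)) = 0 := by
  have hlead : 0 < 1 - ε ∨ 0 < steadyStateB1 μ N0 p ζ ε RA RI := by
    rcases hε.2.lt_or_eq with hε1 | rfl
    · exact .inl (by linarith)
    · exact .inr (steadyStateB1_pos_of_eq_one hμ hζ)
  have hroot := existsUnique_pos_root_quadratic (by linarith [hε.2])
    (steadyStateB0_neg hμ hp hζ hε.1 hR0) hlead
  refine ⟨(existsUnique_congr fun β => ?_).mpr hroot, hroot⟩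
  exact and_congr_right fun hβ => gfun_eq_one_iff_quadratic hμ hp hζ hε hβ.le

/-- If `R₀ > 1`, then there is exactly one `β > 0` with
`g(β) = 1`; equivalently, the quadratic `b2·x² + b1·x + b0` has exactly one
positive real root. -/
theorem unique_positive_root_of_R0_gt_one
    (μ N0 p ζ ε RA RI : ℝ)
    (hμ : 0 < μ) (hN0 : 0 ≤ N0) (hp : 0 ≤ p) (hζ : 0 ≤ ζ) (hε : ε ∈ Set.Icc (0:ℝ) 1)
    (hRA : 0 ≤ RA) (hRI : 0 ≤ RI)
    (hR0 : 1 < (μ * N0 / (p + μ)) * (1 + p * (1 - ε) / (ζ * ε + μ)) * (RA + RI)) :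
    (∃! β : ℝ, 0 < β ∧ gfun μ N0 p ζ ε RA RI β = 1) ∧
      ∃! x : ℝ, 0 < x ∧
        (1 - ε) * x ^ 2 +
            ((p + μ) * (1 - ε) + ζ * ε + μ - μ * N0 * (1 - ε) * (RA + RI)) * x +
            (p + μ) * (ζ * ε + μ) *
              (1 - (μ * N0 / (p + μ)) * (1 + p * (1 - ε) / (ζ * ε + μ)) * (RA + RI)) = 0 :=
  unique_positive_root_of_R0_gt_one_general μ N0 p ζ ε RA RI hμ hp hζ hε hR0
end
end
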